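/- arXiv:1801.01014 — 3 statements merged into one kernel-verified Lean document; each statement's English description precedes it below -/
import Mathlib

section
/- Let (X,d) be an unbounded metric space, let r̃ be a scaling sequence, and let u*, v* be distinct non-adjacent vertices of the cluster graph G_{X,r̃}. If G_{X,r̃} is finite, then there exist two metrics d¹, d² ∈ M(ρ_X) on V(G_{X,r̃}) such that d¹(u*,v*) ≠ d²(u*,v*). -/
open Filter Topology
open scoped Classical

/-- An unbounded metric space. -/
def UnboundedSpace (X : Type*) [MetricSpace X] : Prop :=
  ¬ Bornology.IsBounded (Set.univ : Set X)

/-- A scaling sequence: positive reals tending to infinity. -/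
def ScalingSeq (r : ℕ → ℝ) : Prop :=
  (∀ n, 0 < r n) ∧ Filter.Tendsto r Filter.atTop Filter.atTop

/-- Two sequences are mutually stable w.r.t. `r` if `d(x_n, y_n)/r_n` has a finite limit. -/
def MutuallyStable {X : Type*} [MetricSpace X] (r : ℕ → ℝ) (x y : ℕ → X) : Prop :=
  ∃ L : ℝ, Filter.Tendsto (fun n => dist (x n) (y n) / r n) Filter.atTop (nhds L)

/-- `Seq(X, r̃)`: sequences going to infinity such that `d(x_n, p)/r_n` has a finite limit. -/
def SeqInf {X : Type*} [MetricSpace X] (r : ℕ → ℝ) (p : X) : Set (ℕ → X) :=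
  {x | Filter.Tendsto (fun n => dist (x n) p) Filter.atTop Filter.atTop ∧
    ∃ L : ℝ, Filter.Tendsto (fun n => dist (x n) p / r n) Filter.atTop (nhds L)}

/-- The relation `x̃ ≡ ỹ`, i.e. `d(x_n, y_n)/r_n → 0`. -/
def EquivSeq {X : Type*} [MetricSpace X] (r : ℕ → ℝ) (x y : ℕ → X) : Prop :=
  Filter.Tendsto (fun n => dist (x n) (y n) / r n) Filter.atTop (nhds 0)

/-- The `≡`-equivalence class of `x` inside `Seq(X, r̃)`. -/
def classOf {X : Type*} [MetricSpace X] (r : ℕ → ℝ) (p : X) (x : ℕ → X) : Set (ℕ → X) :=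
  {y | y ∈ SeqInf r p ∧ EquivSeq r x y}

/-- The vertex set of the cluster graph `G_{X, r̃}`: all `≡`-classes of `Seq(X, r̃)`. -/
def VertexSet {X : Type*} [MetricSpace X] (r : ℕ → ℝ) (p : X) : Set (Set (ℕ → X)) :=
  {v | ∃ x ∈ SeqInf r p, v = classOf r p x}

/-- Adjacency in the cluster graph `G_{X, r̃}`: distinct classes whose representatives
are mutually stable. -/
def AdjacentCl {X : Type*} [MetricSpace X] (r : ℕ → ℝ) (p : X) (u v : Set (ℕ → X)) : Prop :=
  u ∈ VertexSet r p ∧ v ∈ VertexSet r p ∧ u ≠ v ∧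
    ∀ x ∈ u, ∀ y ∈ v, MutuallyStable r x y

/-- The weight `ρ_X` on the cluster graph: for an edge `{u,v}` it is the (unique) limit
`lim d(x_n, y_n)/r_n` for representatives. -/
noncomputable def rhoX {X : Type*} [MetricSpace X] (r : ℕ → ℝ) (u v : Set (ℕ → X)) : ℝ :=
  sSup {L : ℝ | ∃ x ∈ u, ∃ y ∈ v,
    Filter.Tendsto (fun n => dist (x n) (y n) / r n) Filter.atTop (nhds L)}

/-- The root `ν₀ = X̃⁰_{∞,r̃}`: sequences with `d(z_n,p) → ∞` and `d(z_n,p)/r_n → 0`. -/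
def rootClass {X : Type*} [MetricSpace X] (r : ℕ → ℝ) (p : X) : Set (ℕ → X) :=
  {z | Filter.Tendsto (fun n => dist (z n) p) Filter.atTop Filter.atTop ∧
    Filter.Tendsto (fun n => dist (z n) p / r n) Filter.atTop (nhds 0)}

/-- The labeling `ρ⁰` of vertices: `ρ⁰(v) = lim d(x_n,p)/r_n` for `x̃ ∈ v`. -/
noncomputable def rho0 {X : Type*} [MetricSpace X] (r : ℕ → ℝ) (p : X)
    (v : Set (ℕ → X)) : ℝ :=
  sSup {L : ℝ | ∃ x ∈ v, Filter.Tendsto (fun n => dist (x n) p / r n) Filter.atTop (nhds L)}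

/-- A self-stable family: a subset of `Seq(X, r̃)` any two of whose members are
mutually stable. -/
def SelfStable {X : Type*} [MetricSpace X] (r : ℕ → ℝ) (p : X) (F : Set (ℕ → X)) : Prop :=
  F ⊆ SeqInf r p ∧ ∀ x ∈ F, ∀ y ∈ F, MutuallyStable r x y

/-- A maximal self-stable set `X̃_{∞, r̃}`. -/
def MaxSelfStable {X : Type*} [MetricSpace X] (r : ℕ → ℝ) (p : X) (F : Set (ℕ → X)) : Prop :=
  SelfStable r p F ∧ ∀ F', SelfStable r p F' → F ⊆ F' → F = F'

/-- The pretangent space `Ω^X_{∞,r̃}` attached to a maximal self-stable set `F`: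
the set of `≡`-classes of members of `F`. -/
def PretangentCl {X : Type*} [MetricSpace X] (r : ℕ → ℝ) (F : Set (ℕ → X)) :
    Set (Set (ℕ → X)) :=
  {v | ∃ x ∈ F, v = {y | y ∈ F ∧ EquivSeq r x y}}

/-- A clique in the cluster graph `G_{X, r̃}`. -/
def IsCliqueCl {X : Type*} [MetricSpace X] (r : ℕ → ℝ) (p : X)
    (C : Set (Set (ℕ → X))) : Prop :=
  C ⊆ VertexSet r p ∧ ∀ u ∈ C, ∀ v ∈ C, u ≠ v → AdjacentCl r p u v

/-- `D` is a metric on the subset `S`. -/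
def IsMetricOn {V : Type*} (S : Set V) (D : V → V → ℝ) : Prop :=
  (∀ u ∈ S, D u u = 0) ∧ (∀ u ∈ S, ∀ v ∈ S, u ≠ v → 0 < D u v) ∧
  (∀ u ∈ S, ∀ v ∈ S, D u v = D v u) ∧
  (∀ u ∈ S, ∀ v ∈ S, ∀ z ∈ S, D u z ≤ D u v + D v z)
/-!
Fix a representative `rep a` of every vertex `a` and put `g a b n = d(rep a n, rep b n) / r n`.
These sequences are bounded, and `g u v` has no limit because `u` and `v` are not adjacent, so
it has two distinct cluster points `L₁ ≠ L₂`. Since the graph is finite, a diagonal extraction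
along a subsequence tending to `Lᵢ` makes all `g a b` converge; the limits form a pseudometric
which agrees with `ρ_X` on edges. Raising every nonzero distance to at least some `ε` smaller
than all edge weights and than `max L₁ L₂` gives a metric, still extending `ρ_X`, whose value at
`(u, v)` is `max ε Lᵢ`, and these two values differ.
-/

theorem IsCompact.exists_mapClusterPt_ne_of_not_tendsto {Y ι : Type*} [TopologicalSpace Y]
    {l : Filter ι} [l.NeBot] {K : Set Y} (hK : IsCompact K) {f : ι → Y} (hf : ∀ i, f i ∈ K)
    (h : ¬∃ L, Tendsto f l (𝓝 L)) :
    ∃ L₁ ∈ K, ∃ L₂ ∈ K, L₁ ≠ L₂ ∧ MapClusterPt L₁ l f ∧ MapClusterPt L₂ l f := by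
  obtain ⟨L₁, hL₁K, hL₁⟩ := hK.exists_mapClusterPt (f := l) (tendsto_principal.2 (.of_forall hf))
  by_contra! hunique
  exact h ⟨L₁, hK.tendsto_nhds_of_unique_mapClusterPt (.of_forall hf)
    fun L hLK hL => by_contra fun hne => hunique L₁ hL₁K L hLK (Ne.symm hne) hL₁ hL⟩

theorem Set.Finite.exists_strictMono_forall_tendsto {Y ι : Type*} [PseudoMetricSpace Y]
    [ProperSpace Y] {I : Set ι} (hI : I.Finite) {f : ι → ℕ → Y}
    (hf : ∀ i ∈ I, Bornology.IsBounded (Set.range (f i))) :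
    ∃ φ : ℕ → ℕ, StrictMono φ ∧ ∀ i ∈ I, ∃ L, Tendsto (f i ∘ φ) atTop (𝓝 L) := by
  have := hI.fintype
  let F : ℕ → I → Y := fun n i => f i n
  have hF : Bornology.IsBounded (Set.range F) := by
    refine Bornology.forall_isBounded_image_eval_iff.1 fun i => (hf i i.2).subset ?_
    rintro _ ⟨_, ⟨n, rfl⟩, rfl⟩
    exact ⟨n, rfl⟩
  obtain ⟨L, -, φ, hφ, hL⟩ := tendsto_subseq_of_bounded hF fun n => Set.mem_range_self n
  exact ⟨φ, hφ, fun i hi => ⟨L ⟨i, hi⟩, ((continuous_apply _).tendsto _).comp hL⟩⟩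

theorem max_ne_max_of_ne {α : Type*} [LinearOrder α] {a b c : α} (hab : a ≠ b)
    (hc : c < max a b) : max c a ≠ max c b := by
  rcases hab.lt_or_gt with h | h
  · rw [max_eq_right h.le] at hc
    exact (max_lt hc h).ne.trans_eq (max_eq_right hc.le).symm
  · rw [max_eq_left h.le] at hc
    exact (max_eq_right hc.le).trans_ne (max_lt hc h).ne.symm

noncomputable def truncDist {V : Type*} (ε : ℝ) (ℓ : V → V → ℝ) (a b : V) : ℝ :=
  if a = b then 0 else max ε (ℓ a b)

theorem truncDist_of_ne {V : Type*} {ε : ℝ} {ℓ : V → V → ℝ} {a b : V} (hab : a ≠ b) :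
    truncDist ε ℓ a b = max ε (ℓ a b) :=
  if_neg hab

theorem isMetricOn_truncDist {V : Type*} {S : Set V} {ε : ℝ} {ℓ : V → V → ℝ} (hε : 0 < ε)
    (hsymm : ∀ a ∈ S, ∀ b ∈ S, ℓ a b = ℓ b a)
    (htri : ∀ a ∈ S, ∀ b ∈ S, ∀ c ∈ S, ℓ a c ≤ ℓ a b + ℓ b c) :
    IsMetricOn S (truncDist ε ℓ) := by
  have hnonneg : ∀ a b, 0 ≤ truncDist ε ℓ a b := fun a b => by
    unfold truncDist; split_ifs
    exacts [le_rfl, hε.le.trans (le_max_left _ _)]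
  refine ⟨fun a _ => if_pos rfl, fun a _ b _ hab => ?_, fun a ha b hb => ?_,
    fun a ha b hb c hc => ?_⟩
  · rw [truncDist_of_ne hab]
    exact hε.trans_le (le_max_left _ _)
  · unfold truncDist
    rw [hsymm a ha b hb]
    simp only [eq_comm]
  · rcases eq_or_ne a c with rfl | hac
    · rw [truncDist, if_pos rfl]
      exact add_nonneg (hnonneg a b) (hnonneg b a)
    rcases eq_or_ne a b with rfl | hab
    · simp [truncDist]
    rcases eq_or_ne b c with rfl | hbc
    · simp [truncDist]
    rw [truncDist_of_ne hac, truncDist_of_ne hab, truncDist_of_ne hbc]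
    refine max_le ?_ ((htri a ha b hb c hc).trans (add_le_add (le_max_right _ _)
      (le_max_right _ _)))
    linarith [le_max_left ε (ℓ a b), le_max_left ε (ℓ b c)]

noncomputable def limDist {V X : Type*} [MetricSpace X] (s : ℕ → ℝ) (x : V → ℕ → X)
    (a b : V) : ℝ :=
  limUnder atTop fun n => dist (x a n) (x b n) / s n

theorem isMetricOn_truncDist_limDist {V X : Type*} [MetricSpace X] {S : Set V} {s : ℕ → ℝ}
    {x : V → ℕ → X} (hs : ∀ n, 0 ≤ s n)
    (hconv : ∀ a ∈ S, ∀ b ∈ S, ∃ L, Tendsto (fun n => dist (x a n) (x b n) / s n) atTop (𝓝 L))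
    {ε : ℝ} (hε : 0 < ε) : IsMetricOn S (truncDist ε (limDist s x)) := by
  refine isMetricOn_truncDist hε (fun a _ b _ => by simp only [limDist, dist_comm])
    fun a ha b hb c hc => ?_
  obtain ⟨Lab, hab⟩ := hconv a ha b hb
  obtain ⟨Lbc, hbc⟩ := hconv b hb c hc
  obtain ⟨Lac, hac⟩ := hconv a ha c hc
  rw [limDist, limDist, limDist, hab.limUnder_eq, hbc.limUnder_eq, hac.limUnder_eq]
  refine le_of_tendsto_of_tendsto' hac (hab.add hbc) fun n => ?_
  rw [← add_div]
  exact div_le_div_of_nonneg_right (dist_triangle _ _ _) (hs n)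

section ClusterGraph

variable {X : Type*} [MetricSpace X] {r : ℕ → ℝ} {p : X} {x y z x' y' : ℕ → X}
  {a b : Set (ℕ → X)}

theorem EquivSeq.refl (r : ℕ → ℝ) (x : ℕ → X) : EquivSeq r x x := by
  simp [EquivSeq]

theorem EquivSeq.symm (h : EquivSeq r x y) : EquivSeq r y x := by
  simpa only [EquivSeq, dist_comm] using h

theorem EquivSeq.trans (h₁ : EquivSeq r x y) (h₂ : EquivSeq r y z) (hr : ∀ n, 0 ≤ r n) :
    EquivSeq r x z := by
  refine squeeze_zero (fun n => div_nonneg dist_nonneg (hr n)) (fun n => ?_)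
    (by simpa using h₁.add h₂)
  rw [← add_div]
  exact div_le_div_of_nonneg_right (dist_triangle _ _ _) (hr n)

theorem tendsto_dist_div_congr (hr : ∀ n, 0 ≤ r n) (hx : EquivSeq r x x')
    (hy : EquivSeq r y y') {L : ℝ}
    (h : Tendsto (fun n => dist (x n) (y n) / r n) atTop (𝓝 L)) :
    Tendsto (fun n => dist (x' n) (y' n) / r n) atTop (𝓝 L) := by
  refine h.congr_dist (squeeze_zero (fun n => dist_nonneg) (fun n => ?_)
    (by simpa using hx.add hy))
  rw [Real.dist_eq, ← sub_div, abs_div, abs_of_nonneg (hr n), ← add_div, ← Real.dist_eq]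
  exact div_le_div_of_nonneg_right (dist_dist_dist_le _ _ _ _) (hr n)

theorem exists_forall_dist_div_mem_Icc (hr : ∀ n, 0 ≤ r n) (hx : x ∈ SeqInf r p)
    (hy : y ∈ SeqInf r p) : ∃ C, ∀ n, dist (x n) (y n) / r n ∈ Set.Icc 0 C := by
  obtain ⟨-, Lx, hLx⟩ := hx
  obtain ⟨-, Ly, hLy⟩ := hy
  obtain ⟨C, hC⟩ := (hLx.add hLy).bddAbove_range
  refine ⟨C, fun n => ⟨div_nonneg dist_nonneg (hr n), le_trans ?_ (hC ⟨n, rfl⟩)⟩⟩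
  dsimp only
  rw [← add_div]
  exact div_le_div_of_nonneg_right (dist_triangle_right _ _ _) (hr n)

theorem mem_classOf_self (hx : x ∈ SeqInf r p) : x ∈ classOf r p x :=
  ⟨hx, .refl r x⟩

theorem classOf_eq_of_equivSeq (hr : ∀ n, 0 ≤ r n) (h : EquivSeq r x y) :
    classOf r p x = classOf r p y :=
  Set.ext fun _ => ⟨fun hz => ⟨hz.1, h.symm.trans hz.2 hr⟩, fun hz => ⟨hz.1, h.trans hz.2 hr⟩⟩

theorem eq_classOf_of_mem (hr : ∀ n, 0 ≤ r n) (ha : a ∈ VertexSet r p) (hx : x ∈ a) :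
    a = classOf r p x := by
  obtain ⟨x₀, -, rfl⟩ := ha
  exact classOf_eq_of_equivSeq hr hx.2

theorem equivSeq_of_mem (hr : ∀ n, 0 ≤ r n) (ha : a ∈ VertexSet r p) (hx : x ∈ a)
    (hy : y ∈ a) : EquivSeq r x y := by
  rw [eq_classOf_of_mem hr ha hx] at hy
  exact hy.2

theorem subset_seqInf_of_mem_vertexSet (ha : a ∈ VertexSet r p) : a ⊆ SeqInf r p := by
  obtain ⟨x₀, -, rfl⟩ := ha
  exact fun _ hx => hx.1

theorem nonempty_of_mem_vertexSet (ha : a ∈ VertexSet r p) : a.Nonempty := by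
  obtain ⟨x, hx, rfl⟩ := ha
  exact ⟨x, mem_classOf_self hx⟩

theorem adjacentCl_of_tendsto (hr : ∀ n, 0 ≤ r n) (ha : a ∈ VertexSet r p)
    (hb : b ∈ VertexSet r p) (hab : a ≠ b) (hx : x ∈ a) (hy : y ∈ b) {L : ℝ}
    (hL : Tendsto (fun n => dist (x n) (y n) / r n) atTop (𝓝 L)) : AdjacentCl r p a b :=
  ⟨ha, hb, hab, fun _ hx' _ hy' =>
    ⟨L, tendsto_dist_div_congr hr (equivSeq_of_mem hr ha hx hx')
      (equivSeq_of_mem hr hb hy hy') hL⟩⟩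

theorem rhoX_eq_of_tendsto (hr : ∀ n, 0 ≤ r n) (ha : a ∈ VertexSet r p)
    (hb : b ∈ VertexSet r p) (hx : x ∈ a) (hy : y ∈ b) {L : ℝ}
    (hL : Tendsto (fun n => dist (x n) (y n) / r n) atTop (𝓝 L)) : rhoX r a b = L := by
  have hlimits : {L' : ℝ | ∃ x ∈ a, ∃ y ∈ b,
      Tendsto (fun n => dist (x n) (y n) / r n) atTop (𝓝 L')} = {L} := by
    ext L'
    constructor
    · rintro ⟨x', hx', y', hy', hL'⟩
      exact tendsto_nhds_unique (tendsto_dist_div_congr hr (equivSeq_of_mem hr ha hx' hx)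
        (equivSeq_of_mem hr hb hy' hy) hL') hL
    · rintro rfl
      exact ⟨x, hx, y, hy, hL⟩
  rw [rhoX, hlimits, csSup_singleton]

theorem AdjacentCl.tendsto_rhoX (hr : ∀ n, 0 ≤ r n) (h : AdjacentCl r p a b) (hx : x ∈ a)
    (hy : y ∈ b) : Tendsto (fun n => dist (x n) (y n) / r n) atTop (𝓝 (rhoX r a b)) := by
  obtain ⟨L, hL⟩ := h.2.2.2 x hx y hy
  rwa [rhoX_eq_of_tendsto hr h.1 h.2.1 hx hy hL]

theorem AdjacentCl.rhoX_pos (hr : ∀ n, 0 ≤ r n) (h : AdjacentCl r p a b) : 0 < rhoX r a b := by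
  obtain ⟨x, hx⟩ := nonempty_of_mem_vertexSet h.1
  obtain ⟨y, hy⟩ := nonempty_of_mem_vertexSet h.2.1
  have hlim := h.tendsto_rhoX hr hx hy
  refine (ge_of_tendsto' hlim fun n => div_nonneg dist_nonneg (hr n)).lt_of_ne fun h0 => ?_
  rw [← h0] at hlim
  exact h.2.2.1 (by rw [eq_classOf_of_mem hr h.1 hx, eq_classOf_of_mem hr h.2.1 hy,
    classOf_eq_of_equivSeq hr hlim])

theorem exists_pos_lt_rhoX (hr : ∀ n, 0 ≤ r n) (hfin : (VertexSet r p).Finite) {m : ℝ}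
    (hm : 0 < m) : ∃ ε, 0 < ε ∧ ε < m ∧ ∀ a b, AdjacentCl r p a b → ε < rhoX r a b := by
  set E := {q : Set (ℕ → X) × Set (ℕ → X) | AdjacentCl r p q.1 q.2}
  have hE : E.Finite := (hfin.prod hfin).subset fun q hq => ⟨hq.1, hq.2.1⟩
  have hsmall : ∀ᶠ ε in 𝓝[>] 0, ε < m ∧ ∀ q ∈ E, ε < rhoX r q.1 q.2 :=
    nhdsWithin_le_nhds <| (eventually_lt_nhds hm).and <|
      hE.eventually_all.2 fun q hq => eventually_lt_nhds (AdjacentCl.rhoX_pos hr hq)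
  obtain ⟨ε, ⟨hεm, hερ⟩, hε⟩ := (hsmall.and self_mem_nhdsWithin).exists
  exact ⟨ε, hε, hεm, fun a b hab => hερ (a, b) hab⟩

theorem exists_metric_of_mapClusterPt (hr : ∀ n, 0 ≤ r n) (hfin : (VertexSet r p).Finite)
    {rep : Set (ℕ → X) → ℕ → X} (hrep : ∀ a ∈ VertexSet r p, rep a ∈ a) {u v : Set (ℕ → X)}
    (huv : u ≠ v) {ε : ℝ} (hε : 0 < ε) (hερ : ∀ a b, AdjacentCl r p a b → ε < rhoX r a b)
    {L : ℝ} (hL : MapClusterPt L atTop fun n => dist (rep u n) (rep v n) / r n) :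
    ∃ D : Set (ℕ → X) → Set (ℕ → X) → ℝ, IsMetricOn (VertexSet r p) D ∧
      (∀ a b, AdjacentCl r p a b → D a b = rhoX r a b) ∧ D u v = max ε L := by
  obtain ⟨ψ, hψ, hLψ⟩ := hL.tendsto_subseq
  obtain ⟨φ, hφ, hconv⟩ := (hfin.prod hfin).exists_strictMono_forall_tendsto
    (f := fun q n => dist (rep q.1 (ψ n)) (rep q.2 (ψ n)) / r (ψ n)) fun q hq => by
      obtain ⟨C, hC⟩ := exists_forall_dist_div_mem_Icc hr
        (subset_seqInf_of_mem_vertexSet hq.1 (hrep _ hq.1))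
        (subset_seqInf_of_mem_vertexSet hq.2 (hrep _ hq.2))
      exact (Metric.isBounded_Icc 0 C).subset (Set.range_subset_iff.2 fun n => hC (ψ n))
  refine ⟨truncDist ε (limDist (r ∘ ψ ∘ φ) fun a => rep a ∘ ψ ∘ φ),
    isMetricOn_truncDist_limDist (fun n => hr _) (fun a ha b hb => hconv (a, b) ⟨ha, hb⟩) hε,
    fun a b hab => ?_, ?_⟩
  · have hlim := (hab.tendsto_rhoX hr (hrep a hab.1) (hrep b hab.2.1)).comp
      (hψ.comp hφ).tendsto_atTop
    rw [truncDist_of_ne hab.2.2.1]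
    exact (congrArg (max ε) hlim.limUnder_eq).trans (max_eq_right (hερ a b hab).le)
  · rw [truncDist_of_ne huv]
    exact congrArg (max ε) (hLψ.comp hφ.tendsto_atTop).limUnder_eq

end ClusterGraph

theorem exists_two_metrics_of_nonadjacent_general {X : Type*} [MetricSpace X]
    (p : X) (r : ℕ → ℝ) (hr : ScalingSeq r)
    (hfin : (VertexSet r p).Finite)
    (u v : Set (ℕ → X)) (hu : u ∈ VertexSet r p) (hv : v ∈ VertexSet r p)
    (hne : u ≠ v) (hnadj : ¬AdjacentCl r p u v) :
    ∃ D₁ D₂ : Set (ℕ → X) → Set (ℕ → X) → ℝ,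
      IsMetricOn (VertexSet r p) D₁ ∧ IsMetricOn (VertexSet r p) D₂ ∧
      (∀ a b, AdjacentCl r p a b → D₁ a b = rhoX r a b) ∧
      (∀ a b, AdjacentCl r p a b → D₂ a b = rhoX r a b) ∧
      D₁ u v ≠ D₂ u v := by
  have hr₀ : ∀ n, 0 ≤ r n := fun n => (hr.1 n).le
  have : Nonempty X := ⟨p⟩
  choose! rep hrep using fun a (ha : a ∈ VertexSet r p) => nonempty_of_mem_vertexSet ha
  obtain ⟨C, hC⟩ := exists_forall_dist_div_mem_Icc hr₀
    (subset_seqInf_of_mem_vertexSet hu (hrep u hu)) (subset_seqInf_of_mem_vertexSet hv (hrep v hv))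
  obtain ⟨L₁, hL₁, L₂, hL₂, hL, h₁, h₂⟩ := isCompact_Icc.exists_mapClusterPt_ne_of_not_tendsto hC
    fun ⟨L, hlim⟩ => hnadj (adjacentCl_of_tendsto hr₀ hu hv hne (hrep u hu) (hrep v hv) hlim)
  have hmax : 0 < max L₁ L₂ := by
    rcases hL.lt_or_gt with h | h
    exacts [lt_max_of_lt_right (hL₁.1.trans_lt h), lt_max_of_lt_left (hL₂.1.trans_lt h)]
  obtain ⟨ε, hε, hεL, hερ⟩ := exists_pos_lt_rhoX hr₀ hfin hmax
  obtain ⟨D₁, hD₁, hρ₁, huv₁⟩ := exists_metric_of_mapClusterPt hr₀ hfin hrep hne hε hερ h₁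
  obtain ⟨D₂, hD₂, hρ₂, huv₂⟩ := exists_metric_of_mapClusterPt hr₀ hfin hrep hne hε hερ h₂
  exact ⟨D₁, D₂, hD₁, hD₂, hρ₁, hρ₂, huv₁ ▸ huv₂ ▸ max_ne_max_of_ne hL hεL⟩

/-- Lemma l2.2.15. If the cluster graph `G_{X,r̃}` is finite and
`u*, v*` are distinct non-adjacent vertices, then there are two metrics in `M(ρ_X)`
which differ at `(u*, v*)`. -/
theorem exists_two_metrics_of_nonadjacent {X : Type*} [MetricSpace X]
    (hX : UnboundedSpace X) (p : X) (r : ℕ → ℝ) (hr : ScalingSeq r)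
    (hfin : (VertexSet r p).Finite)
    (u v : Set (ℕ → X)) (hu : u ∈ VertexSet r p) (hv : v ∈ VertexSet r p)
    (hne : u ≠ v) (hnadj : ¬AdjacentCl r p u v) :
    ∃ D₁ D₂ : Set (ℕ → X) → Set (ℕ → X) → ℝ,
      IsMetricOn (VertexSet r p) D₁ ∧ IsMetricOn (VertexSet r p) D₂ ∧
      (∀ a b, AdjacentCl r p a b → D₁ a b = rhoX r a b) ∧
      (∀ a b, AdjacentCl r p a b → D₂ a b = rhoX r a b) ∧
      D₁ u v ≠ D₂ u v :=
  exists_two_metrics_of_nonadjacent_general p r hr hfin u v hu hv hne hnadj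
end

section
/- Let G=G(w) be a finite, connected, metrizable weighted graph. Then: (a) for every metric d∈M(w) and all distinct non-adjacent vertices μ, ν of G, the double inequality max_{P∈𝒫_{μ,ν}} (2 max_{e∈E(P)} w(e) − Σ_{e∈E(P)} w(e))₊ ≤ d(μ,ν) ≤ min_{P∈𝒫_{μ,ν}} Σ_{e∈E(P)} w(e) holds, where (·)₊ denotes the positive part; and (b) conversely, if μ and ν are distinct non-adjacent vertices of G and t is a positive real number satisfying max_{P∈𝒫_{μ,ν}} (2 max_{e∈E(P)} w(e) − Σ_{e∈E(P)} w(e))₊ ≤ t ≤ min_{P∈𝒫_{μ,ν}} Σ_{e∈E(P)} w(e), then there exists a metric d∈M(w) with d(μ,ν)=t. -/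
/-!
Part (a) is the triangle inequality along the path: `d(μ,ν)` is at most the weight of a
`μ`–`ν` path, and the edge `e = ab` of the path satisfies
`w(e) = d(a,b) ≤ d(a,μ) + d(μ,ν) + d(ν,b)`, where the outer two terms are bounded by the two
arcs of the path.

For (b), let `d` be the path distance of `G` (least weight of a path). Any `D ∈ M(w)` lies
below it, so `d` is positive off the diagonal, and `d ∈ M(w)`. Now join `μ` and `ν` by a new
edge of length `t`: the resulting shortest-path metric `min (d x y) (d x μ + t + d ν y) ...`
equals `t` at `(μ, ν)` because `t ≤ d(μ,ν)`, and it still equals `w(ab)` on every edge `ab`: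
for shortest paths `P : μ → a` and `Q : b → ν`, either they are disjoint, and the lower bound on
`t` for the path `P, ab, Q` gives `w(ab) ≤ |P| + t + |Q|`, or they meet and already contain an
`a`–`b` walk.
-/

open Filter Topology

/-- `D` belongs to `M(w)`: `D` is a metric on `V(G)` agreeing with the weight `w` on
every edge of `G`. -/
def GraphMetric {V : Type*} (G : SimpleGraph V) (w : Sym2 V → ℝ) (D : V → V → ℝ) : Prop :=
  (∀ u, D u u = 0) ∧ (∀ u v : V, u ≠ v → 0 < D u v) ∧ (∀ u v : V, D u v = D v u) ∧
  (∀ u v z : V, D u z ≤ D u v + D v z) ∧ ∀ u v : V, G.Adj u v → D u v = w s(u, v)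

open SimpleGraph

namespace SimpleGraph.Walk

variable {V : Type*} {G : SimpleGraph V} (w : Sym2 V → ℝ)

def weight {u v : V} (p : G.Walk u v) : ℝ := (p.edges.map w).sum

@[simp] lemma weight_nil {u : V} : (nil : G.Walk u u).weight w = 0 := rfl

@[simp] lemma weight_cons {u v x : V} (h : G.Adj u v) (p : G.Walk v x) :
    (cons h p).weight w = w s(u, v) + p.weight w := by
  simp [weight]

@[simp] lemma weight_append {u v x : V} (p : G.Walk u v) (q : G.Walk v x) :
    (p.append q).weight w = p.weight w + q.weight w := by
  simp [weight]

@[simp] lemma weight_reverse {u v : V} (p : G.Walk u v) : p.reverse.weight w = p.weight w := by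
  simp [weight, List.sum_reverse]

variable {w}

lemma weight_nonneg (hw : ∀ e ∈ G.edgeSet, 0 ≤ w e) {u v : V} (p : G.Walk u v) :
    0 ≤ p.weight w :=
  List.sum_nonneg <| by
    simpa using fun e he => hw e (p.edges_subset_edgeSet he)

lemma weight_bypass_le [DecidableEq V] (hw : ∀ e ∈ G.edgeSet, 0 ≤ w e) {u v : V}
    (p : G.Walk u v) : p.bypass.weight w ≤ p.weight w :=
  (p.edges_bypass_sublist_edges.map w).sum_le_sum <| by
    simpa using fun e he => hw e (p.edges_subset_edgeSet he)

end SimpleGraph.Walk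

structure IsMetric {X : Type*} (d : X → X → ℝ) : Prop where
  self_eq_zero : ∀ x, d x x = 0
  pos : ∀ x y, x ≠ y → 0 < d x y
  symm : ∀ x y, d x y = d y x
  triangle : ∀ x y z, d x z ≤ d x y + d y z

lemma IsMetric.nonneg {X : Type*} {d : X → X → ℝ} (hd : IsMetric d) (x y : X) : 0 ≤ d x y := by
  by_cases h : x = y
  · rw [h, hd.self_eq_zero]
  · exact (hd.pos x y h).le

section Shortcut

variable {X : Type*} {d : X → X → ℝ} {μ ν : X} {t : ℝ}

/-- The metric obtained from `d` by joining `μ` and `ν` by an extra edge of length `t`. -/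
def shortcut (d : X → X → ℝ) (μ ν : X) (t : ℝ) (x y : X) : ℝ :=
  min (d x y) (min (d x μ + t + d ν y) (d x ν + t + d μ y))

lemma shortcut_eq_left {x y : X} (h₁ : d x y ≤ d x μ + t + d ν y)
    (h₂ : d x y ≤ d x ν + t + d μ y) : shortcut d μ ν t x y = d x y :=
  min_eq_left (le_min h₁ h₂)

lemma shortcut_eq_or (d : X → X → ℝ) (μ ν : X) (t : ℝ) (x y : X) :
    shortcut d μ ν t x y = d x y ∨ shortcut d μ ν t x y = d x μ + t + d ν y ∨
      shortcut d μ ν t x y = d x ν + t + d μ y := by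
  unfold shortcut
  rcases min_choice (d x y) (min (d x μ + t + d ν y) (d x ν + t + d μ y)) with h | h <;> rw [h]
  · exact Or.inl rfl
  · rcases min_choice (d x μ + t + d ν y) (d x ν + t + d μ y) with h' | h' <;> simp [h']

lemma IsMetric.shortcut_apply_eq (hd : IsMetric d) (h : t ≤ d μ ν) :
    shortcut d μ ν t μ ν = t := by
  have := hd.nonneg μ ν
  simp only [shortcut, hd.self_eq_zero, zero_add, add_zero]
  rw [min_eq_left (show t ≤ d μ ν + t + d μ ν by linarith), min_eq_right h]

theorem isMetric_shortcut (hd : IsMetric d) (ht : 0 < t) : IsMetric (shortcut d μ ν t) where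
  self_eq_zero x := by
    simp only [shortcut, hd.self_eq_zero]
    exact min_eq_left (le_min (by linarith [hd.nonneg x μ, hd.nonneg ν x])
      (by linarith [hd.nonneg x ν, hd.nonneg μ x]))
  pos x y hxy :=
    lt_min (hd.pos x y hxy) (lt_min (by linarith [hd.nonneg x μ, hd.nonneg ν y])
      (by linarith [hd.nonneg x ν, hd.nonneg μ y]))
  symm x y := by
    simp only [shortcut, hd.symm y x, hd.symm y μ, hd.symm ν x, hd.symm y ν, hd.symm μ x]
    rw [min_comm (d μ y + t + d x ν)]
    congr 2 <;> ring
  triangle x y z := by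
    have h0 := hd.nonneg
    have h3 := hd.triangle
    have h₁ : shortcut d μ ν t x z ≤ d x z := min_le_left _ _
    have h₂ : shortcut d μ ν t x z ≤ d x μ + t + d ν z :=
      (min_le_right _ _).trans (min_le_left _ _)
    have h₃ : shortcut d μ ν t x z ≤ d x ν + t + d μ z :=
      (min_le_right _ _).trans (min_le_right _ _)
    rcases shortcut_eq_or d μ ν t x y with hxy | hxy | hxy <;>
    rcases shortcut_eq_or d μ ν t y z with hyz | hyz | hyz <;>
    rw [hxy, hyz] <;>
    linarith [h3 x y z, h3 x y μ, h3 x y ν, h3 ν y z, h3 μ y z, h3 x μ z, h3 x ν z,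
      h0 ν y, h0 y μ, h0 y ν, h0 μ y]

end Shortcut

namespace GraphMetric

variable {V : Type*} {G : SimpleGraph V} {w : Sym2 V → ℝ} {D : V → V → ℝ}

lemma isMetric (hD : GraphMetric G w D) : IsMetric D :=
  ⟨hD.1, hD.2.1, hD.2.2.1, hD.2.2.2.1⟩

lemma of_isMetric (hD : IsMetric D) (hw : ∀ u v, G.Adj u v → D u v = w s(u, v)) :
    GraphMetric G w D :=
  ⟨hD.self_eq_zero, hD.pos, hD.symm, hD.triangle, hw⟩

lemma apply_of_adj (hD : GraphMetric G w D) {u v : V} (h : G.Adj u v) : D u v = w s(u, v) :=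
  hD.2.2.2.2 u v h

lemma weight_pos (hD : GraphMetric G w D) {e : Sym2 V} (he : e ∈ G.edgeSet) : 0 < w e := by
  induction e using Sym2.ind with
  | _ u v => exact hD.apply_of_adj he ▸ hD.isMetric.pos u v (G.ne_of_adj he)

lemma le_weight (hD : GraphMetric G w D) {u v : V} (p : G.Walk u v) : D u v ≤ p.weight w := by
  induction p with
  | nil => simp [hD.isMetric.self_eq_zero]
  | @cons a b c h q ih =>
    rw [Walk.weight_cons, ← hD.apply_of_adj h]
    linarith [hD.isMetric.triangle a b c]

lemma two_mul_le_add_weight (hD : GraphMetric G w D) {u v : V} (p : G.Walk u v) {e : Sym2 V}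
    (he : e ∈ p.edges) : 2 * w e ≤ D u v + p.weight w := by
  induction p with
  | nil => simp at he
  | @cons a b c h q ih =>
    have hab := hD.apply_of_adj h
    rw [Walk.weight_cons]
    rw [Walk.edges_cons, List.mem_cons] at he
    rcases he with rfl | he
    · linarith [hD.isMetric.triangle a c b, hD.isMetric.symm c b, hD.le_weight q]
    · linarith [ih he, hD.isMetric.triangle b a c, hD.isMetric.symm a b]

lemma weight_le_weight_add_add_weight (hD : GraphMetric G w D) {μ ν a b : V} {t : ℝ}
    (ht : 0 ≤ t) (hyp : ∀ W : G.Walk μ ν, W.IsPath → ∀ e ∈ W.edges, 2 * w e - W.weight w ≤ t)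
    (hab : G.Adj a b) {P : G.Walk μ a} (hP : P.IsPath) {Q : G.Walk b ν} (hQ : Q.IsPath) :
    w s(a, b) ≤ P.weight w + t + Q.weight w := by
  have hw e he := (hD.weight_pos (e := e) he).le
  by_cases hdisj : P.support.Disjoint Q.support
  · have hW : (P.append (.cons hab Q)).IsPath := by
      rw [Walk.isPath_def, Walk.support_append, Walk.support_cons, List.tail_cons,
        List.nodup_append']
      exact ⟨hP.support_nodup, hQ.support_nodup, hdisj⟩
    have := hyp _ hW s(a, b) (by simp)
    simp only [Walk.weight_append, Walk.weight_cons] at this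
    linarith
  · -- `P` and `Q` meet, so `a` and `b` are already joined by a walk inside them.
    obtain ⟨x, hxP, hxQ⟩ : ∃ x, x ∈ P.support ∧ x ∈ Q.support := by
      simpa [List.Disjoint] using hdisj
    obtain ⟨P₁, P₂, rfl⟩ := Walk.mem_support_iff_exists_append.mp hxP
    obtain ⟨Q₁, Q₂, rfl⟩ := Walk.mem_support_iff_exists_append.mp hxQ
    have := hD.le_weight (P₂.reverse.append Q₁.reverse)
    simp only [Walk.weight_append, Walk.weight_reverse, hD.apply_of_adj hab] at this ⊢
    linarith [P₁.weight_nonneg hw, Q₂.weight_nonneg hw]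

end GraphMetric

namespace SimpleGraph

variable {V : Type*} {G : SimpleGraph V} {w : Sym2 V → ℝ}

noncomputable def pathDist (G : SimpleGraph V) (w : Sym2 V → ℝ) (u v : V) : ℝ :=
  ⨅ p : G.Path u v, p.1.weight w

variable [Fintype V]

lemma pathDist_le_weight (hw : ∀ e ∈ G.edgeSet, 0 ≤ w e) {u v : V} (p : G.Walk u v) :
    G.pathDist w u v ≤ p.weight w := by
  classical
  exact (ciInf_le (Set.finite_range _).bddBelow ⟨p.bypass, p.bypass_isPath⟩).trans
    (p.weight_bypass_le hw)

lemma Connected.exists_isPath_weight_eq_pathDist (hconn : G.Connected) (u v : V) :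
    ∃ p : G.Walk u v, p.IsPath ∧ p.weight w = G.pathDist w u v := by
  classical
  have : Nonempty (G.Path u v) := (hconn u v).elim fun p => ⟨p.toPath⟩
  obtain ⟨p, hp⟩ := exists_eq_ciInf_of_finite (f := fun p : G.Path u v => p.1.weight w)
  exact ⟨p.1, p.2, hp⟩

end SimpleGraph

namespace GraphMetric

variable {V : Type*} [Fintype V] {G : SimpleGraph V} {w : Sym2 V → ℝ} {D : V → V → ℝ}

lemma le_pathDist (hconn : G.Connected) (hD : GraphMetric G w D) (u v : V) :
    D u v ≤ G.pathDist w u v := by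
  obtain ⟨p, -, hp⟩ := hconn.exists_isPath_weight_eq_pathDist (w := w) u v
  exact hp ▸ hD.le_weight p

theorem pathDist (hconn : G.Connected) (hD : GraphMetric G w D) :
    GraphMetric G w (G.pathDist w) := by
  have hw e he := (hD.weight_pos (e := e) he).le
  have hsymm (u v : V) : G.pathDist w u v ≤ G.pathDist w v u := by
    obtain ⟨p, -, hp⟩ := hconn.exists_isPath_weight_eq_pathDist (w := w) v u
    simpa [hp] using pathDist_le_weight hw p.reverse
  refine .of_isMetric ⟨fun u => ?_, fun u v huv => ?_, fun u v => ?_, fun u v x => ?_⟩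
    fun u v h => ?_
  · exact le_antisymm (pathDist_le_weight hw .nil)
      (hD.isMetric.self_eq_zero u ▸ hD.le_pathDist hconn u u)
  · exact (hD.isMetric.pos u v huv).trans_le (hD.le_pathDist hconn u v)
  · exact le_antisymm (hsymm u v) (hsymm v u)
  · obtain ⟨p, -, hp⟩ := hconn.exists_isPath_weight_eq_pathDist (w := w) u v
    obtain ⟨q, -, hq⟩ := hconn.exists_isPath_weight_eq_pathDist (w := w) v x
    simpa [hp, hq] using pathDist_le_weight hw (p.append q)
  · refine le_antisymm ?_ (hD.apply_of_adj h ▸ hD.le_pathDist hconn u v)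
    simpa using pathDist_le_weight hw (Walk.cons h .nil)

theorem exists_graphMetric_apply_eq (hconn : G.Connected) (hD : GraphMetric G w D) {μ ν : V}
    {t : ℝ} (ht : 0 < t)
    (hyp : ∀ W : G.Walk μ ν, W.IsPath →
      (∀ e ∈ W.edges, 2 * w e - W.weight w ≤ t) ∧ t ≤ W.weight w) :
    ∃ D', GraphMetric G w D' ∧ D' μ ν = t := by
  have hd : GraphMetric G w (G.pathDist w) := hD.pathDist hconn
  have hdμν : t ≤ G.pathDist w μ ν := by
    obtain ⟨P, hP, hPd⟩ := hconn.exists_isPath_weight_eq_pathDist (w := w) μ ν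
    exact hPd ▸ (hyp P hP).2
  have key {a b : V} (hab : G.Adj a b) :
      G.pathDist w a b ≤ G.pathDist w a μ + t + G.pathDist w ν b := by
    obtain ⟨P, hP, hPd⟩ := hconn.exists_isPath_weight_eq_pathDist (w := w) μ a
    obtain ⟨Q, hQ, hQd⟩ := hconn.exists_isPath_weight_eq_pathDist (w := w) b ν
    rw [hd.apply_of_adj hab, hd.isMetric.symm a μ, hd.isMetric.symm ν b, ← hPd, ← hQd]
    exact hD.weight_le_weight_add_add_weight ht.le (fun W hW => (hyp W hW).1) hab hP hQ
  refine ⟨shortcut (G.pathDist w) μ ν t,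
    .of_isMetric (isMetric_shortcut hd.isMetric ht) fun a b hab => ?_,
    hd.isMetric.shortcut_apply_eq hdμν⟩
  have hba := key hab.symm
  rw [hd.isMetric.symm b a, hd.isMetric.symm b μ, hd.isMetric.symm ν a] at hba
  rw [shortcut_eq_left (key hab) (by linarith), hd.apply_of_adj hab]

end GraphMetric

theorem metric_range_on_nonadjacent_general {V : Type*} [Fintype V] (G : SimpleGraph V)
    (hconn : G.Connected) (w : Sym2 V → ℝ)
    (hmet : ∃ D, GraphMetric G w D) :
    (∀ D, GraphMetric G w D → ∀ μ ν : V, μ ≠ ν → ¬G.Adj μ ν →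
      ∀ W : G.Walk μ ν, W.IsPath →
        (∀ e ∈ W.edges, 2 * w e - (W.edges.map w).sum ≤ D μ ν) ∧
        D μ ν ≤ (W.edges.map w).sum) ∧
    (∀ μ ν : V, μ ≠ ν → ¬G.Adj μ ν → ∀ t : ℝ, 0 < t →
      (∀ W : G.Walk μ ν, W.IsPath →
        (∀ e ∈ W.edges, 2 * w e - (W.edges.map w).sum ≤ t) ∧
        t ≤ (W.edges.map w).sum) →
      ∃ D, GraphMetric G w D ∧ D μ ν = t) := by
  obtain ⟨D₀, hD₀⟩ := hmet
  exact ⟨fun D hD μ ν _ _ W _ =>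
      ⟨fun e he => sub_le_iff_le_add.2 (hD.two_mul_le_add_weight W he), hD.le_weight W⟩,
    fun μ ν _ _ t ht hyp => hD₀.exists_graphMetric_apply_eq hconn ht hyp⟩

/-- Lemma l2.2.16. In a finite connected metrizable weighted graph,
for distinct non-adjacent `μ, ν`: (a) every `d ∈ M(w)` satisfies
`max_P (2 max_{e∈P} w(e) − Σ_{e∈P} w(e))₊ ≤ d(μ,ν) ≤ min_P Σ_{e∈P} w(e)`;
(b) conversely, every positive `t` in that range is realized by some `d ∈ M(w)`. -/
theorem metric_range_on_nonadjacent {V : Type*} [Fintype V] (G : SimpleGraph V)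
    (hconn : G.Connected) (w : Sym2 V → ℝ) (hw : ∀ e ∈ G.edgeSet, 0 ≤ w e)
    (hmet : ∃ D, GraphMetric G w D) :
    (∀ D, GraphMetric G w D → ∀ μ ν : V, μ ≠ ν → ¬G.Adj μ ν →
      ∀ W : G.Walk μ ν, W.IsPath →
        (∀ e ∈ W.edges, 2 * w e - (W.edges.map w).sum ≤ D μ ν) ∧
        D μ ν ≤ (W.edges.map w).sum) ∧
    (∀ μ ν : V, μ ≠ ν → ¬G.Adj μ ν → ∀ t : ℝ, 0 < t →
      (∀ W : G.Walk μ ν, W.IsPath →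
        (∀ e ∈ W.edges, 2 * w e - (W.edges.map w).sum ≤ t) ∧
        t ≤ (W.edges.map w).sum) →
      ∃ D, GraphMetric G w D ∧ D μ ν = t) :=
  metric_range_on_nonadjacent_general G hconn w hmet
end

section
/- Let C=C(w) be a weighted cycle with w(e)>0 for every edge e of C and such that Σ_{e∈E(C)} w(e) = 2 max_{e∈E(C)} w(e). Then C(w) is metrizable, and for every pair μ, ν of distinct non-adjacent vertices of C, all metrics d∈M(w) assign the same value to d(μ,ν); consequently the graph Ĉ obtained from C by adding as edges all pairs in E^{un}(C) is a complete graph. -/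
/-!
Number the vertices `0, …, m` so that the edge `e₀` joins `m` to `0`; the hypothesis on the
weights says that `w(e₀)` is the length of the path `0, 1, …, m`. In any `d ∈ M(w)` each
`d(i, j)` is at most the length of the subpath from `i` to `j`, and
`w(e₀) = d(0, m) ≤ d(0, i) + d(i, j) + d(j, m)` forces all these bounds to be equalities.
Hence `d(i, j) = |xᵢ - xⱼ|` with `xᵢ` the length of the path from `0` to `i`, and, the
weights being positive, this formula does define a metric in `M(w)`.
-/

open Filter Topology

/-- `G` is a cycle graph: its vertices can be numbered `0, …, n−1` (with `n ≥ 3`) so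
that adjacency is exactly cyclic consecutiveness. -/
def IsCycleGraph {V : Type*} [Fintype V] (G : SimpleGraph V) : Prop :=
  ∃ n : ℕ, 3 ≤ n ∧ ∃ e : V ≃ Fin n, ∀ u v : V,
    G.Adj u v ↔ ((e u).val + 1) % n = (e v).val ∨ ((e v).val + 1) % n = (e u).val

open Finset Fin.NatCast

section Triangle

variable {V : Type*} {D : V → V → ℝ}

theorem le_sum_Ico_of_triangle (hD₀ : ∀ u, D u u = 0) (hD : ∀ u v z, D u z ≤ D u v + D v z)
    (p : ℕ → V) {i j : ℕ} (hij : i ≤ j) :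
    D (p i) (p j) ≤ ∑ k ∈ Ico i j, D (p k) (p (k + 1)) := by
  induction j, hij using Nat.le_induction with
  | base => simp [hD₀]
  | succ j hij ih =>
    rw [sum_Ico_succ_top hij]
    linarith [hD (p i) (p j) (p (j + 1))]

theorem eq_sum_Ico_of_sum_range_le (hD₀ : ∀ u, D u u = 0)
    (hD : ∀ u v z, D u z ≤ D u v + D v z) (p : ℕ → V) {m : ℕ}
    (htight : ∑ k ∈ range m, D (p k) (p (k + 1)) ≤ D (p 0) (p m)) {i j : ℕ} (hij : i ≤ j)
    (hjm : j ≤ m) :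
    D (p i) (p j) = ∑ k ∈ Ico i j, D (p k) (p (k + 1)) := by
  refine (le_sum_Ico_of_triangle hD₀ hD p hij).antisymm ?_
  have hsplit := sum_Ico_consecutive (fun k => D (p k) (p (k + 1))) (Nat.zero_le i) hij
  rw [range_eq_Ico, ← sum_Ico_consecutive _ (Nat.zero_le j) hjm, ← hsplit] at htight
  linarith [le_sum_Ico_of_triangle hD₀ hD p (Nat.zero_le i), le_sum_Ico_of_triangle hD₀ hD p hjm,
    hD (p 0) (p i) (p m), hD (p i) (p j) (p m)]

end Triangle

theorem graphMetric_abs_sub {V : Type*} {G : SimpleGraph V} {w : Sym2 V → ℝ} {x : V → ℝ}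
    (hx : Function.Injective x) (hedge : ∀ u v, G.Adj u v → |x u - x v| = w s(u, v)) :
    GraphMetric G w fun u v => |x u - x v| :=
  ⟨fun _ => by simp, fun _ _ huv => abs_pos.2 (sub_ne_zero.2 (hx.ne huv)),
    fun _ _ => abs_sub_comm _ _, fun _ _ _ => abs_sub_le _ _ _, hedge⟩

section Cycle

variable {V : Type*} {G : SimpleGraph V} {m : ℕ} {f : V ≃ Fin (m + 1)} {w : Sym2 V → ℝ}

/-- Indices are read modulo `m + 1`: `cycleWeight f w m` is the weight of the edge from `m`
back to `0`. -/
def cycleWeight (f : V ≃ Fin (m + 1)) (w : Sym2 V → ℝ) (k : ℕ) : ℝ :=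
  w s(f.symm k, f.symm (k + 1))

def cycleCoord (f : V ≃ Fin (m + 1)) (w : Sym2 V → ℝ) (v : V) : ℝ :=
  ∑ k ∈ range (f v), cycleWeight f w k

theorem cycleWeight_val_of_add_one_eq {u v : V} (h : f u + 1 = f v) :
    cycleWeight f w (f u) = w s(u, v) := by
  simp [cycleWeight, h]

theorem adj_symm_natCast_succ (hadj : ∀ u v, G.Adj u v ↔ f u + 1 = f v ∨ f v + 1 = f u)
    (k : ℕ) : G.Adj (f.symm k) (f.symm (k + 1 : ℕ)) := by
  simp [hadj]

theorem sum_edgeFinset_eq_sum_cycleWeight [Fintype G.edgeSet]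
    (hadj : ∀ u v, G.Adj u v ↔ f u + 1 = f v ∨ f v + 1 = f u) (hm : 2 ≤ m) :
    ∑ e ∈ G.edgeFinset, w e = ∑ k ∈ range (m + 1), cycleWeight f w k := by
  rw [← Fin.sum_univ_eq_sum_range]
  symm
  refine sum_nbij (fun i => s(f.symm i, f.symm (i + 1))) (fun i _ => by simp [hadj]) ?_ ?_
    (fun i _ => by simp [cycleWeight])
  · intro i _ j _ hij
    rcases Sym2.eq_iff.1 hij with ⟨h, -⟩ | ⟨h₁, h₂⟩
    · exact f.symm.injective h
    · have h₁ := f.symm.injective h₁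
      have h₂ := f.symm.injective h₂
      have h : j + 1 + 1 = j := by rw [← h₁, h₂]
      rw [add_assoc, add_eq_left, Fin.ext_iff, Fin.val_add, Fin.val_one',
        Nat.mod_eq_of_lt (by omega : 1 < m + 1), Nat.mod_eq_of_lt (by omega : 1 + 1 < m + 1)] at h
      simp at h
  · rintro e he
    induction e using Sym2.ind with
    | _ u v =>
      rcases (hadj u v).1 (by simpa using he) with h | h
      · exact ⟨f u, mem_coe.2 (mem_univ _), by simp [h]⟩
      · exact ⟨f v, mem_coe.2 (mem_univ _), by simp [h, Sym2.eq_swap]⟩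

theorem GraphMetric.eq_cycleCoord_sub {D : V → V → ℝ}
    (hadj : ∀ u v, G.Adj u v ↔ f u + 1 = f v ∨ f v + 1 = f u)
    (hs : ∑ k ∈ range m, cycleWeight f w k = cycleWeight f w m) (hD : GraphMetric G w D)
    {u v : V} (huv : f u ≤ f v) :
    D u v = cycleCoord f w v - cycleCoord f w u := by
  obtain ⟨hD₀, -, hDsymm, hDtri, hDw⟩ := hD
  have hstep (k : ℕ) : D (f.symm k) (f.symm (k + 1 : ℕ)) = cycleWeight f w k := by
    rw [hDw _ _ (adj_symm_natCast_succ hadj k), cycleWeight, Nat.cast_succ]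
  have hclose : D (f.symm (0 : ℕ)) (f.symm m) = cycleWeight f w m := by
    rw [hDsymm, ← hstep, Fin.natCast_self, Nat.cast_zero]
  have key := eq_sum_Ico_of_sum_range_le hD₀ hDtri (fun k : ℕ => f.symm k) (m := m)
    (by simp only [hstep, hclose, hs, le_refl]) huv (Nat.lt_succ_iff.1 (f v).isLt)
  simp only [Fin.cast_val_eq_self, Equiv.symm_apply_apply, hstep] at key
  rw [key, cycleCoord, cycleCoord, sum_Ico_eq_sub _ huv]

theorem GraphMetric.eq_of_sum_cycleWeight_eq {D₁ D₂ : V → V → ℝ}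
    (hadj : ∀ u v, G.Adj u v ↔ f u + 1 = f v ∨ f v + 1 = f u)
    (hs : ∑ k ∈ range m, cycleWeight f w k = cycleWeight f w m)
    (hD₁ : GraphMetric G w D₁) (hD₂ : GraphMetric G w D₂) : D₁ = D₂ := by
  funext u v
  rcases le_total (f u) (f v) with h | h
  · rw [hD₁.eq_cycleCoord_sub hadj hs h, hD₂.eq_cycleCoord_sub hadj hs h]
  · rw [hD₁.2.2.1, hD₂.2.2.1, hD₁.eq_cycleCoord_sub hadj hs h, hD₂.eq_cycleCoord_sub hadj hs h]

theorem graphMetric_cycleCoord (hadj : ∀ u v, G.Adj u v ↔ f u + 1 = f v ∨ f v + 1 = f u)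
    (hw : ∀ e ∈ G.edgeSet, 0 < w e) (hs : ∑ k ∈ range m, cycleWeight f w k = cycleWeight f w m) :
    GraphMetric G w fun u v => |cycleCoord f w u - cycleCoord f w v| := by
  have hpos (k : ℕ) : 0 < cycleWeight f w k :=
    hw _ (by simpa [Nat.cast_succ] using adj_symm_natCast_succ hadj k)
  have hmono : StrictMono fun n => ∑ k ∈ range n, cycleWeight f w k :=
    strictMono_nat_of_lt_succ fun n => by simpa [sum_range_succ] using hpos n
  have hedge {u v : V} (h : f u + 1 = f v) :
      |cycleCoord f w u - cycleCoord f w v| = w s(u, v) := by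
    rw [← cycleWeight_val_of_add_one_eq (w := w) h]
    rcases eq_or_ne (f u) (Fin.last m) with hu | hu
    · have hv : f v = 0 := by rw [← h, hu, Fin.last_add_one]
      simp [cycleCoord, hu, hv, hs, abs_of_pos (hpos m)]
    · have hv : (f v : ℕ) = f u + 1 := by
        rw [← h, Fin.val_add_one_of_lt (lt_of_le_of_ne (Fin.le_last _) hu)]
      rw [abs_sub_comm, cycleCoord, cycleCoord, hv, sum_range_succ, add_sub_cancel_left,
        abs_of_pos (hpos _)]
  refine graphMetric_abs_sub (hmono.injective.comp (Fin.val_injective.comp f.injective)) ?_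
  intro u v huv
  rcases (hadj u v).1 huv with h | h
  · exact hedge h
  · rw [abs_sub_comm, hedge h, Sym2.eq_swap]

end Cycle

theorem IsCycleGraph.exists_equiv_fin {V : Type*} [Fintype V] {G : SimpleGraph V}
    (hC : IsCycleGraph G) {a b : V} (hab : G.Adj a b) :
    ∃ m, 2 ≤ m ∧ ∃ f : V ≃ Fin (m + 1),
      (∀ u v, G.Adj u v ↔ f u + 1 = f v ∨ f v + 1 = f u) ∧ f a = Fin.last m ∧ f b = 0 := by
  obtain ⟨n, hn, e, he⟩ := hC
  obtain ⟨m, rfl⟩ : ∃ m, n = m + 1 := ⟨n - 1, by omega⟩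
  have hsucc (i j : Fin (m + 1)) : (i.val + 1) % (m + 1) = j ↔ i + 1 = j := by
    rw [Fin.ext_iff, Fin.val_add, Fin.val_one', Nat.mod_eq_of_lt (by omega : 1 < m + 1)]
  have hadj (u v : V) : G.Adj u v ↔ e u + 1 = e v ∨ e v + 1 = e u := by
    rw [he, hsucc, hsucc]
  have hlast : (-1 : Fin (m + 1)) = Fin.last m := by ext; simp
  refine ⟨m, by omega, ?_⟩
  rcases (hadj a b).1 hab with h | h
  · refine ⟨e.trans (Equiv.subRight (e b)), fun u v => ?_, by simp [← h, hlast], by simp⟩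
    simp [hadj, sub_add_eq_add_sub]
  · refine ⟨e.trans (Equiv.subLeft (e b)), fun u v => ?_, by simp [← h, hlast], by simp⟩
    have hreflect (x y : Fin (m + 1)) : e b - x + 1 = e b - y ↔ y + 1 = x := by grind
    simp [hadj, hreflect, or_comm]

theorem cycle_unique_metrization_general {V : Type*} [Fintype V]
    (G : SimpleGraph V) [DecidableRel G.Adj] (hC : IsCycleGraph G)
    (w : Sym2 V → ℝ) (hw : ∀ e ∈ G.edgeFinset, 0 < w e)
    (e₀ : Sym2 V) (he₀ : e₀ ∈ G.edgeFinset)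
    (hsum : ∑ e ∈ G.edgeFinset, w e = 2 * w e₀) :
    (∃ D, GraphMetric G w D) ∧
    (∀ μ ν : V, μ ≠ ν → ¬G.Adj μ ν →
      ∀ D₁ D₂, GraphMetric G w D₁ → GraphMetric G w D₂ → D₁ μ ν = D₂ μ ν) ∧
    (∀ μ ν : V, μ ≠ ν → G.Adj μ ν ∨
      (¬G.Adj μ ν ∧
        ∀ D₁ D₂, GraphMetric G w D₁ → GraphMetric G w D₂ → D₁ μ ν = D₂ μ ν)) := by
  induction e₀ using Sym2.ind with | _ a b => ?_
  have hab : G.Adj a b := G.mem_edgeFinset.1 he₀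
  obtain ⟨m, hm, f, hadj, ha, hb⟩ := hC.exists_equiv_fin hab
  have hclose : cycleWeight f w m = w s(a, b) := by
    have hclosing : f a + 1 = f b := by rw [ha, hb, Fin.last_add_one]
    rw [← cycleWeight_val_of_add_one_eq (w := w) hclosing, ha, Fin.val_last]
  have hs : ∑ k ∈ range m, cycleWeight f w k = cycleWeight f w m := by
    have := sum_edgeFinset_eq_sum_cycleWeight (w := w) hadj hm
    rw [sum_range_succ, hsum, hclose] at this
    linarith
  have huniq {D₁ D₂} (h₁ : GraphMetric G w D₁) (h₂ : GraphMetric G w D₂) (μ ν : V) :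
      D₁ μ ν = D₂ μ ν :=
    congrFun₂ (h₁.eq_of_sum_cycleWeight_eq hadj hs h₂) μ ν
  refine ⟨⟨_, graphMetric_cycleCoord hadj (fun e he => hw e (G.mem_edgeFinset.2 he)) hs⟩,
    fun μ ν _ _ _ _ h₁ h₂ => huniq h₁ h₂ μ ν, fun μ ν _ => ?_⟩
  exact (em (G.Adj μ ν)).imp_right fun h => ⟨h, fun _ _ h₁ h₂ => huniq h₁ h₂ μ ν⟩

/-- Corollary c2.2.19. A weighted cycle with positive weights whose
total weight equals twice its maximal edge weight is metrizable, all metrics in `M(w)`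
agree on every pair of distinct non-adjacent vertices, and hence `Ĉ` is complete. -/
theorem cycle_unique_metrization {V : Type*} [Fintype V] [DecidableEq V]
    (G : SimpleGraph V) [DecidableRel G.Adj] (hC : IsCycleGraph G)
    (w : Sym2 V → ℝ) (hw : ∀ e ∈ G.edgeFinset, 0 < w e)
    (e₀ : Sym2 V) (he₀ : e₀ ∈ G.edgeFinset) (hmax : ∀ e ∈ G.edgeFinset, w e ≤ w e₀)
    (hsum : ∑ e ∈ G.edgeFinset, w e = 2 * w e₀) :
    (∃ D, GraphMetric G w D) ∧
    (∀ μ ν : V, μ ≠ ν → ¬G.Adj μ ν →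
      ∀ D₁ D₂, GraphMetric G w D₁ → GraphMetric G w D₂ → D₁ μ ν = D₂ μ ν) ∧
    (∀ μ ν : V, μ ≠ ν → G.Adj μ ν ∨
      (¬G.Adj μ ν ∧
        ∀ D₁ D₂, GraphMetric G w D₁ → GraphMetric G w D₂ → D₁ μ ν = D₂ μ ν)) :=
  cycle_unique_metrization_general G hC w hw e₀ he₀ hsum
end
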